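/- arXiv:1510.07473 — 2 statements merged into one kernel-verified Lean document; each statement's English description precedes it below -/
import Mathlib

section
/- Let μ* be an upper quasi-density on ℕ, let k be a positive integer, and let h₁, …, hₙ be nonnegative integers pairwise incongruent modulo k. Set V := ⋃_{i=1}^{n} (k·ℕ + hᵢ). Then μ*(V \ F) ≥ n/k for every finite subset F of ℕ. -/
/-- `k·X + h = {k*x + h : x ∈ X}` -/
def affImage (k h : ℕ) (X : Set ℕ) : Set ℕ := (fun x => k * x + h) '' X

/-! The complement of `V \ F` is covered, up to a finite set, by the progressions `k·ℕ + (r + k)` with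
`r < k` a residue not attained by the `hᵢ` (shifted by `k` so that (F4♭) applies); there are `k - n` of them, each of upper quasi-density
`1/k`. Finite sets have upper quasi-density `0`, since `{1} = 1·{0} + 1 = 2·{0} + 1` forces
`μ* {0} = 0`. Subadditivity then gives `1 = μ* ℕ ≤ μ* (V \ F) + (k - n)/k`. -/

def UnionSubadditive {α : Type*} (μ : Set α → ℝ) : Prop :=
  ∀ X Y : Set α, μ (X ∪ Y) ≤ μ X + μ Y

def ScalesUnderAffImage (μ : Set ℕ → ℝ) : Prop :=
  ∀ (X : Set ℕ) (h k : ℕ), 0 < h → 0 < k → μ (affImage k h X) = (1 / (k : ℝ)) * μ X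

theorem mem_affImage_univ_iff {k a m : ℕ} : m ∈ affImage k a Set.univ ↔ a ≤ m ∧ a ≡ m [MOD k] := by
  constructor
  · rintro ⟨x, -, rfl⟩
    exact ⟨Nat.le_add_left a (k * x), (Nat.modEq_iff_dvd' (Nat.le_add_left a _)).2 (by simp)⟩
  · rintro ⟨ham, hmod⟩
    obtain ⟨x, hx⟩ := (Nat.modEq_iff_dvd' ham).1 hmod
    exact ⟨x, trivial, by simp only; omega⟩

namespace ScalesUnderAffImage

variable {μ : Set ℕ → ℝ}

theorem apply_empty (hμ : ScalesUnderAffImage μ) : μ ∅ = 0 := by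
  have h := hμ ∅ 1 2 one_pos two_pos
  simp only [affImage, Set.image_empty] at h
  linarith

theorem apply_singleton (hμ : ScalesUnderAffImage μ) (m : ℕ) : μ {m} = 0 := by
  have shift (a k : ℕ) : affImage k a {0} = {a} := by simp [affImage]
  have hzero : μ {0} = 0 := by
    have h₁ := hμ {0} 1 1 one_pos one_pos
    have h₂ := hμ {0} 1 2 one_pos two_pos
    rw [shift] at h₁ h₂
    linarith
  rcases Nat.eq_zero_or_pos m with rfl | hm
  · exact hzero
  · rw [← shift m 1, hμ {0} m 1 hm one_pos, hzero, mul_zero]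

end ScalesUnderAffImage

namespace UnionSubadditive

variable {α : Type*} {μ : Set α → ℝ}

theorem apply_biUnion_le {ι : Type*} (hμ : UnionSubadditive μ) (hempty : μ ∅ ≤ 0)
    (s : Finset ι) (f : ι → Set α) : μ (⋃ i ∈ s, f i) ≤ ∑ i ∈ s, μ (f i) := by
  classical
  induction s using Finset.induction_on with
  | empty => simpa using hempty
  | insert a s ha ih =>
    rw [Finset.set_biUnion_insert, Finset.sum_insert ha]
    linarith [hμ (f a) (⋃ i ∈ s, f i)]

theorem apply_finite_nonpos {μ : Set ℕ → ℝ} (hμ : UnionSubadditive μ)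
    (hscale : ScalesUnderAffImage μ) {s : Set ℕ} (hs : s.Finite) : μ s ≤ 0 := by
  induction s, hs using Set.Finite.induction_on with
  | empty => exact hscale.apply_empty.le
  | @insert a s _ _ ih =>
    rw [Set.insert_eq]
    linarith [hμ {a} s, hscale.apply_singleton a]

theorem apply_univ_le_add {μ : Set ℕ → ℝ} (hμ : UnionSubadditive μ)
    (hscale : ScalesUnderAffImage μ) {A B : Set ℕ} (hAB : (A ∪ B)ᶜ.Finite) :
    μ Set.univ ≤ μ A + μ B := by
  have hcover : Set.univ = A ∪ ((A ∪ B)ᶜ ∪ B) := by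
    ext m
    simp only [Set.mem_univ, Set.mem_union, Set.mem_compl_iff, true_iff]
    tauto
  rw [hcover]
  linarith [hμ A ((A ∪ B)ᶜ ∪ B), hμ (A ∪ B)ᶜ B, hμ.apply_finite_nonpos hscale hAB]

end UnionSubadditive

open Finset in
theorem card_range_sdiff_image_mod_add {k n : ℕ} (hk : 0 < k) (h : Fin n → ℕ)
    (hinc : ∀ i j : Fin n, i ≠ j → h i % k ≠ h j % k) :
    #(range k \ univ.image (fun i => h i % k)) + n = k := by
  have hsub : univ.image (fun i => h i % k) ⊆ range k := by
    simpa [Finset.image_subset_iff] using fun i => Nat.mod_lt (h i) hk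
  have hinj : Function.Injective (fun i => h i % k) := fun i j hij => by
    by_contra hne
    exact hinc i j hne hij
  simpa [card_image_of_injective _ hinj] using card_sdiff_add_card_eq_card hsub

open Finset in
theorem compl_diff_union_affImage_finite {k n : ℕ} (hk : 0 < k) (h : Fin n → ℕ)
    {F : Set ℕ} (hF : F.Finite) :
    (((⋃ i, affImage k (h i) Set.univ) \ F) ∪
      ⋃ r ∈ range k \ univ.image (fun i => h i % k), affImage k (r + k) Set.univ)ᶜ.Finite := by
  refine ((hF.union (Set.finite_Iio (2 * k))).union
    (Set.finite_iUnion fun i => Set.finite_Iio (h i))).subset ?_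
  intro m hm
  by_contra hsmall
  simp only [Set.mem_union, Set.mem_Iio, Set.mem_iUnion, not_or, not_exists, not_lt] at hsmall
  obtain ⟨⟨hmF, hkm⟩, hhm⟩ := hsmall
  simp only [Set.mem_compl_iff, Set.mem_union, Set.mem_sdiff, Set.mem_iUnion, not_or,
    not_exists, mem_sdiff, mem_range, mem_image, mem_univ, true_and] at hm
  by_cases hres : ∃ i, h i % k = m % k
  · obtain ⟨i, hi⟩ := hres
    exact hm.1 ⟨⟨i, mem_affImage_univ_iff.2 ⟨hhm i, hi⟩⟩, hmF⟩
  · refine hm.2 (m % k) ⟨Nat.mod_lt m hk, not_exists.1 hres⟩ (mem_affImage_univ_iff.2 ⟨?_, ?_⟩)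
    · linarith [Nat.mod_lt m hk]
    · simp [Nat.ModEq]

theorem stmt7_general (μ : Set ℕ → ℝ)
    (h1 : μ Set.univ = 1)
    (h3 : ∀ X Y : Set ℕ, μ (X ∪ Y) ≤ μ X + μ Y)
    (h4 : ∀ (X : Set ℕ) (h k : ℕ), 0 < h → 0 < k →
      μ (affImage k h X) = (1 / (k : ℝ)) * μ X)
    (k : ℕ) (hk : 0 < k) (n : ℕ) (h : Fin n → ℕ)
    (hinc : ∀ i j : Fin n, i ≠ j → h i % k ≠ h j % k) :
    ∀ F : Set ℕ, F.Finite →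
      (n : ℝ) / k ≤ μ ((⋃ i : Fin n, affImage k (h i) Set.univ) \ F) := by
  intro F hF
  set S := Finset.range k \ Finset.univ.image (fun i => h i % k)
  have hcover := UnionSubadditive.apply_univ_le_add h3 h4 (compl_diff_union_affImage_finite hk h hF)
  have hrest : μ (⋃ r ∈ S, affImage k (r + k) Set.univ) ≤ S.card / k := by
    refine (UnionSubadditive.apply_biUnion_le h3 (ScalesUnderAffImage.apply_empty h4).le _ _).trans ?_
    simp [h4 _ _ _ (Nat.add_pos_right _ hk) hk, h1, div_eq_mul_inv]
  have hcard : (S.card : ℝ) + n = k := by exact_mod_cast card_range_sdiff_image_mod_add hk h hinc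
  have hk' : (0 : ℝ) < k := by exact_mod_cast hk
  have hsplit : (n : ℝ) / k = 1 - S.card / k := by
    rw [eq_sub_iff_add_eq, ← add_div, add_comm, hcard, div_self hk'.ne']
  linarith

theorem stmt7 (μ : Set ℕ → ℝ)
    (h1 : μ Set.univ = 1)
    (h2 : ∀ X : Set ℕ, μ X ≤ 1)
    (h3 : ∀ X Y : Set ℕ, μ (X ∪ Y) ≤ μ X + μ Y)
    (h4 : ∀ (X : Set ℕ) (h k : ℕ), 0 < h → 0 < k →
      μ (affImage k h X) = (1 / (k : ℝ)) * μ X)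
    (k : ℕ) (hk : 0 < k) (n : ℕ) (h : Fin n → ℕ)
    (hinc : ∀ i j : Fin n, i ≠ j → h i % k ≠ h j % k) :
    ∀ F : Set ℕ, F.Finite →
      (n : ℝ) / k ≤ μ ((⋃ i : Fin n, affImage k (h i) Set.univ) \ F) :=
  stmt7_general μ h1 h3 h4 k hk n h hinc
end

section
/- Let μ* be an upper quasi-density on ℕ and X ⊆ ℕ a set contained (up to finitely many elements) in an arithmetic progression k·ℕ + h with k ≥ 1 and h ≥ 0. Then μ*(X) ≤ 1/k. -/
@[simp]
lemma affImage_singleton (k h a : ℕ) : affImage k h {a} = {k * a + h} :=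
  Set.image_singleton

@[simp]
lemma affImage_empty (k h : ℕ) : affImage k h ∅ = ∅ :=
  Set.image_empty _

lemma inter_affImage_univ (X : Set ℕ) (k h : ℕ) :
    X ∩ affImage k h Set.univ = affImage k h ((fun x => k * x + h) ⁻¹' X) := by
  rw [affImage, affImage, Set.image_univ, Set.image_preimage_eq_inter_range]

lemma affImage_univ_subset_insert (k h : ℕ) :
    affImage k h Set.univ ⊆ insert h (affImage k (h + k) Set.univ) := by
  rintro _ ⟨y, -, rfl⟩
  rcases y with _ | y
  · simp
  · exact Or.inr ⟨y, trivial, by simp only; ring⟩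

lemma Set.Finite.diff_affImage_add {X : Set ℕ} {k h : ℕ}
    (hfin : (X \ affImage k h Set.univ).Finite) :
    (X \ affImage k (h + k) Set.univ).Finite := by
  refine (hfin.insert h).subset fun x ⟨hxX, hxA⟩ => ?_
  by_cases hxh : x = h
  · exact Or.inl hxh
  · exact Or.inr ⟨hxX, fun hx => hxA ((affImage_univ_subset_insert k h hx).resolve_left hxh)⟩

section QuasiDensity

variable {μ : Set ℕ → ℝ}
  (hsub : ∀ X Y : Set ℕ, μ (X ∪ Y) ≤ μ X + μ Y)
  (hscale : ∀ (X : Set ℕ) (h k : ℕ), 0 < h → 0 < k → μ (affImage k h X) = (1 / (k : ℝ)) * μ X)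

include hscale

lemma measure_empty_eq_zero : μ ∅ = 0 := by
  have := hscale ∅ 1 2 one_pos two_pos
  rw [affImage_empty] at this
  norm_num at this
  linarith

lemma measure_singleton_eq_zero (a : ℕ) : μ {a} = 0 := by
  have hshift : ∀ h, 0 < h → μ {h} = μ {0} ∧ μ {h} = μ {0} / 2 := fun h hh => by
    have h1 := hscale {0} h 1 hh one_pos
    have h2 := hscale {0} h 2 hh two_pos
    simp only [affImage_singleton, mul_zero, zero_add] at h1 h2
    constructor <;> linarith
  have hzero : μ {0} = 0 := by
    obtain ⟨h1, h2⟩ := hshift 1 one_pos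
    linarith
  rcases Nat.eq_zero_or_pos a with rfl | ha
  · exact hzero
  · rw [(hshift a ha).1, hzero]

include hsub

lemma measure_nonpos_of_finite {F : Set ℕ} (hF : F.Finite) : μ F ≤ 0 := by
  induction F, hF using Set.Finite.induction_on with
  | empty => exact (measure_empty_eq_zero hscale).le
  | @insert a s _ _ ih =>
    calc μ (insert a s) ≤ μ {a} + μ s := by rw [Set.insert_eq]; exact hsub _ _
      _ ≤ 0 := by rw [measure_singleton_eq_zero hscale]; linarith

lemma measure_le_of_diff_affImage_finite {X : Set ℕ} {k h : ℕ} (hh : 0 < h) (hk : 0 < k)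
    (hfin : (X \ affImage k h Set.univ).Finite) (hbound : ∀ Y : Set ℕ, μ Y ≤ 1) :
    μ X ≤ 1 / (k : ℝ) := by
  set A := affImage k h Set.univ
  have hinter : μ (X ∩ A) ≤ 1 / (k : ℝ) := by
    rw [inter_affImage_univ, hscale _ h k hh hk]
    have : (0 : ℝ) ≤ 1 / k := by positivity
    nlinarith [hbound ((fun x => k * x + h) ⁻¹' X)]
  calc μ X = μ (X ∩ A ∪ X \ A) := by rw [Set.inter_union_sdiff]
    _ ≤ μ (X ∩ A) + μ (X \ A) := hsub _ _
    _ ≤ 1 / (k : ℝ) := by linarith [measure_nonpos_of_finite hsub hscale hfin]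

end QuasiDensity

theorem stmt9_general (μ : Set ℕ → ℝ)
    (h2 : ∀ X : Set ℕ, μ X ≤ 1)
    (h3 : ∀ X Y : Set ℕ, μ (X ∪ Y) ≤ μ X + μ Y)
    (h4 : ∀ (X : Set ℕ) (h k : ℕ), 0 < h → 0 < k →
      μ (affImage k h X) = (1 / (k : ℝ)) * μ X)
    (X : Set ℕ) (k h : ℕ) (hk : 1 ≤ k)
    (hfin : (X \ affImage k h Set.univ).Finite) :
    μ X ≤ 1 / (k : ℝ) := by
  exact measure_le_of_diff_affImage_finite h3 h4 (by omega) hk hfin.diff_affImage_add h2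

theorem stmt9 (μ : Set ℕ → ℝ)
    (h1 : μ Set.univ = 1)
    (h2 : ∀ X : Set ℕ, μ X ≤ 1)
    (h3 : ∀ X Y : Set ℕ, μ (X ∪ Y) ≤ μ X + μ Y)
    (h4 : ∀ (X : Set ℕ) (h k : ℕ), 0 < h → 0 < k →
      μ (affImage k h X) = (1 / (k : ℝ)) * μ X)
    (X : Set ℕ) (k h : ℕ) (hk : 1 ≤ k)
    (hfin : (X \ affImage k h Set.univ).Finite) :
    μ X ≤ 1 / (k : ℝ) :=
  stmt9_general μ h2 h3 h4 X k h hk hfin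
end
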